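/- arXiv:1502.04269 — 3 statements merged into one kernel-verified Lean document; each statement's English description precedes it below -/
import Mathlib

section
/- Let ρ ∈ ℝ^P be nonzero with minimum margin γ_min = min_i |ρᵀx_i|/‖ρ‖₂ > 0 over training examples (x_i, y_i), i = 1,…,N, and let X_max = max_i ‖x_i‖₂. If Λ > X_max·√P / (2·γ_min), then there exists an integer vector λ ∈ {-Λ,…,Λ}^P such that for every i, sign(λᵀx_i) = sign(ρᵀx_i); in particular the 0–1 loss of λ is at most that of ρ: Σ_i 1[y_i λᵀx_i ≤ 0] ≤ Σ_i 1[y_i ρᵀx_i ≤ 0]. -/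
/-!
Scale `ρ` to `c ρ` with `c = Λ / ‖ρ‖`, so that every coordinate lies in `[-Λ, Λ]`, and round each
coordinate to the nearest integer. The rounding error is at most `1/2` per coordinate, hence at most
`√P ‖x‖ / 2` on the score `λᵀx` by Cauchy–Schwarz, while the score of `c ρ` on `x_i` has absolute
value `Λ |ρᵀx_i| / ‖ρ‖ ≥ Λ γ_min`. The hypothesis on `Λ` makes the error strictly smaller than this,
so no score changes sign.
-/

open Finset

theorem abs_round_le_of_abs_le {α : Type*} [Field α] [LinearOrder α] [IsStrictOrderedRing α]
    [FloorRing α] {r : α} {n : ℤ} (h : |r| ≤ n) : |round r| ≤ n := by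
  rw [abs_le] at h ⊢
  simp only [round_eq]
  constructor
  · exact Int.le_floor.2 (by push_cast; linarith)
  · exact Int.floor_le_iff.2 (by linarith)

theorem Real.sign_eq_of_abs_sub_mul_lt {a b c : ℝ} (h : |a - c * b| < c * |b|) :
    Real.sign a = Real.sign b := by
  rcases lt_trichotomy b 0 with hb | rfl | hb
  · rw [abs_of_neg hb] at h
    rw [Real.sign_of_neg hb, Real.sign_of_neg (by linarith [(abs_lt.1 h).2])]
  · simp only [mul_zero, sub_zero, abs_zero] at h
    exact absurd h (abs_nonneg a).not_gt
  · rw [abs_of_pos hb] at h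
    rw [Real.sign_of_pos hb, Real.sign_of_pos (by linarith [(abs_lt.1 h).1])]

theorem Real.mul_nonpos_iff_of_sign_eq {a b : ℝ} (h : Real.sign a = Real.sign b) (y : ℝ) :
    y * a ≤ 0 ↔ y * b ≤ 0 := by
  rcases lt_trichotomy a 0 with ha | rfl | ha <;> rcases lt_trichotomy b 0 with hb | rfl | hb <;>
    simp only [Real.sign_of_neg, Real.sign_of_pos, Real.sign_zero, *] at h <;> norm_num at h <;>
    constructor <;> intro <;> nlinarith

section Euclidean

variable {ι : Type*} [Fintype ι]

theorem EuclideanSpace.sum_abs_le_sqrt_card_mul_norm (x : EuclideanSpace ℝ ι) :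
    ∑ j, |x j| ≤ √(Fintype.card ι) * ‖x‖ := by
  rw [EuclideanSpace.norm_eq, ← Real.sqrt_mul (Nat.cast_nonneg _)]
  apply Real.le_sqrt_of_sq_le
  simpa using sq_sum_le_card_mul_sum_sq (s := (univ : Finset ι)) (f := fun j => |x j|)

theorem EuclideanSpace.abs_sum_mul_le {d : ι → ℝ} {δ : ℝ} (hd : ∀ j, |d j| ≤ δ)
    (x : EuclideanSpace ℝ ι) : |∑ j, d j * x j| ≤ δ * (√(Fintype.card ι) * ‖x‖) :=
  calc |∑ j, d j * x j|
    _ ≤ ∑ j, |d j| * |x j| := by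
      simpa only [abs_mul] using abs_sum_le_sum_abs (fun j => d j * x j) univ
    _ ≤ ∑ j, δ * |x j| := by gcongr with j; exact hd j
    _ ≤ δ * (√(Fintype.card ι) * ‖x‖) := by
      rw [← mul_sum]
      cases isEmpty_or_nonempty ι
      · simp
      · exact mul_le_mul_of_nonneg_left (sum_abs_le_sqrt_card_mul_norm x)
          ((abs_nonneg _).trans (hd (Classical.arbitrary _)))

/-- The paper's candidate `λ`: `λ_j / Λ` is `ρ_j / ‖ρ‖` rounded to the nearest multiple of
`1 / Λ`. -/
noncomputable def roundedDirection (Λ : ℤ) (ρ : EuclideanSpace ℝ ι) (j : ι) : ℤ :=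
  round (Λ / ‖ρ‖ * ρ j)

theorem abs_roundedDirection_le {Λ : ℤ} (hΛ : 0 ≤ Λ) (ρ : EuclideanSpace ℝ ι) (j : ι) :
    |roundedDirection Λ ρ j| ≤ Λ := by
  have hΛ' : (0 : ℝ) ≤ Λ := by exact_mod_cast hΛ
  refine abs_round_le_of_abs_le ?_
  rw [abs_mul, abs_div, abs_norm, abs_of_nonneg hΛ', div_mul_eq_mul_div]
  exact div_le_of_le_mul₀ (norm_nonneg ρ) hΛ'
    (mul_le_mul_of_nonneg_left (PiLp.norm_apply_le ρ j) hΛ')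

theorem abs_sum_roundedDirection_mul_sub_le (Λ : ℤ) (ρ x : EuclideanSpace ℝ ι) :
    |∑ j, (roundedDirection Λ ρ j : ℝ) * x j - Λ / ‖ρ‖ * ∑ j, ρ j * x j| ≤
      1 / 2 * (√(Fintype.card ι) * ‖x‖) := by
  calc _ = |∑ j, ((roundedDirection Λ ρ j : ℝ) - Λ / ‖ρ‖ * ρ j) * x j| := by
        simp only [sub_mul, mul_assoc, sum_sub_distrib, mul_sum]
    _ ≤ _ := EuclideanSpace.abs_sum_mul_le (fun j => by
        rw [abs_sub_comm]; exact abs_sub_round _) x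

theorem sign_sum_roundedDirection_mul_eq {Λ : ℤ} {ρ x : EuclideanSpace ℝ ι}
    (h : √(Fintype.card ι) * ‖x‖ < 2 * (Λ / ‖ρ‖ * |∑ j, ρ j * x j|)) :
    Real.sign (∑ j, (roundedDirection Λ ρ j : ℝ) * x j) = Real.sign (∑ j, ρ j * x j) :=
  Real.sign_eq_of_abs_sub_mul_lt <|
    (abs_sum_roundedDirection_mul_sub_le Λ ρ x).trans_lt (by linarith)

end Euclidean

theorem min_margin_resolution_bound_general (P N : ℕ)
    (hne : (Finset.univ : Finset (Fin N)).Nonempty)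
    (x : Fin N → EuclideanSpace ℝ (Fin P)) (y : Fin N → ℝ)
    (ρ : EuclideanSpace ℝ (Fin P))
    (γmin Xmax : ℝ)
    (hγ : γmin = Finset.univ.inf' hne (fun i => |∑ j, ρ j * x i j| / ‖ρ‖))
    (hγpos : 0 < γmin)
    (hX : Xmax = Finset.univ.sup' hne (fun i => ‖x i‖))
    (Λ : ℤ) (hΛ : (Λ : ℝ) > Xmax * Real.sqrt P / (2 * γmin)) :
    ∃ lam : Fin P → ℤ, (∀ j, |lam j| ≤ Λ) ∧
      (∀ i, Real.sign (∑ j, (lam j : ℝ) * x i j) = Real.sign (∑ j, ρ j * x i j)) ∧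
      (Finset.univ.filter (fun i => y i * ∑ j, (lam j : ℝ) * x i j ≤ 0)).card ≤
        (Finset.univ.filter (fun i => y i * ∑ j, ρ j * x i j ≤ 0)).card := by
  have hX_le (i : Fin N) : ‖x i‖ ≤ Xmax := hX ▸ le_sup' (fun i => ‖x i‖) (mem_univ i)
  have hγ_le (i : Fin N) : γmin ≤ |∑ j, ρ j * x i j| / ‖ρ‖ := hγ ▸ inf'_le _ (mem_univ i)
  have hΛ₀ : (0 : ℝ) ≤ Λ := by
    obtain ⟨i₀, -⟩ := hne
    have hX₀ : 0 ≤ Xmax := (norm_nonneg _).trans (hX_le i₀)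
    exact (div_nonneg (by positivity) (by positivity)).trans hΛ.le
  have hsign (i : Fin N) :
      Real.sign (∑ j, (roundedDirection Λ ρ j : ℝ) * x i j) = Real.sign (∑ j, ρ j * x i j) := by
    refine sign_sum_roundedDirection_mul_eq ?_
    rw [Fintype.card_fin, div_mul_eq_mul_div, mul_div_assoc]
    calc √P * ‖x i‖ ≤ Xmax * √P := by rw [mul_comm]; gcongr; exact hX_le i
      _ < Λ * (2 * γmin) := (div_lt_iff₀ (by positivity)).1 hΛ
      _ ≤ 2 * (Λ * (|∑ j, ρ j * x i j| / ‖ρ‖)) := by nlinarith [hγ_le i]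
  refine ⟨roundedDirection Λ ρ, abs_roundedDirection_le (by exact_mod_cast hΛ₀) ρ, hsign, ?_⟩
  exact (congrArg card (filter_congr fun i _ => Real.mul_nonpos_iff_of_sign_eq (hsign i) (y i))).le

/-- **Minimum Margin Resolution Bound.** If the resolution parameter `Λ` exceeds
`X_max √P / (2 γ_min)`, then there is an integer coefficient vector
`λ ∈ {-Λ,…,Λ}^P` that classifies every training example the same way as `ρ`,
and hence whose 0–1 loss is at most that of `ρ`. -/
theorem min_margin_resolution_bound (P N : ℕ)
    (hne : (Finset.univ : Finset (Fin N)).Nonempty)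
    (x : Fin N → EuclideanSpace ℝ (Fin P)) (y : Fin N → ℝ)
    (hy : ∀ i, y i = 1 ∨ y i = -1)
    (ρ : EuclideanSpace ℝ (Fin P)) (hρ : ρ ≠ 0)
    (γmin Xmax : ℝ)
    (hγ : γmin = Finset.univ.inf' hne (fun i => |∑ j, ρ j * x i j| / ‖ρ‖))
    (hγpos : 0 < γmin)
    (hX : Xmax = Finset.univ.sup' hne (fun i => ‖x i‖))
    (Λ : ℤ) (hΛ : (Λ : ℝ) > Xmax * Real.sqrt P / (2 * γmin)) :
    ∃ lam : Fin P → ℤ, (∀ j, |lam j| ≤ Λ) ∧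
      (∀ i, Real.sign (∑ j, (lam j : ℝ) * x i j) = Real.sign (∑ j, ρ j * x i j)) ∧
      (Finset.univ.filter (fun i => y i * ∑ j, (lam j : ℝ) * x i j ≤ 0)).card ≤
        (Finset.univ.filter (fun i => y i * ∑ j, ρ j * x i j ≤ 0)).card :=
  min_margin_resolution_bound_general P N hne x y ρ γmin Xmax hγ hγpos hX Λ hΛ
end

section
/- Under the assumptions of the level-set sufficient-conditions theorem (conditions I–IV with C_ψ > 2ε, ε = L·C_λ), if ‖λ*_01 − λ*_ψ‖ > C_λ then Z_01(λ*_ψ) < Z_01(λ*_01), contradicting that λ*_01 minimizes Z_01; hence ‖λ*_01 − λ*_ψ‖ ≤ C_λ. -/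
theorem lt_of_le_of_gap {α : Type*} {f g : α → ℝ} {x y : α} {C ε : ℝ}
    (hfg : ∀ z, f z ≤ g z) (hgap : g y + C < g x) (hclose : g x - f x < ε) (hεC : ε ≤ C) :
    f y < f x :=
  calc f y ≤ g y := hfg y
    _ < g x - C := by linarith
    _ < f x + ε - C := by linarith
    _ ≤ f x := by linarith

theorem minimizers_are_close_general (P : ℕ)
    (Z01 Zpsi : EuclideanSpace ℝ (Fin P) → ℝ)
    (l01 lpsi : EuclideanSpace ℝ (Fin P))
    (h01min : ∀ lam, Z01 l01 ≤ Z01 lam)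
    (Clam Cpsi ε : ℝ)
    (hCpsi2 : Cpsi > 2 * ε)
    -- (I) upper bound on the 0–1 loss
    (hI : ∀ lam, Z01 lam ≤ Zpsi lam)
    -- (III) curvature near the surrogate minimizer
    (hIII : ∀ lam, ‖lam - lpsi‖ > Clam → Zpsi lam - Zpsi lpsi > Cpsi)
    -- (IV) closeness of the losses at the 0–1 minimizer
    (hIV : |Zpsi l01 - Z01 l01| < ε) :
    (‖l01 - lpsi‖ > Clam → Z01 lpsi < Z01 l01) ∧ ‖l01 - lpsi‖ ≤ Clam := by
  have hε : 0 < ε := (abs_nonneg _).trans_lt hIV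
  have far_is_better : ‖l01 - lpsi‖ > Clam → Z01 lpsi < Z01 l01 := fun hfar =>
    lt_of_le_of_gap (C := Cpsi) (ε := ε) hI (by linarith [hIII l01 hfar])
      (abs_lt.mp hIV).2 (by linarith)
  exact ⟨far_is_better, le_of_not_gt fun hfar => (far_is_better hfar).not_ge (h01min lpsi)⟩

/-- Under conditions I, III, IV with `C_ψ > 2ε`, if `‖λ*₀₁ − λ*_ψ‖ > C_λ` then
`Z₀₁(λ*_ψ) < Z₀₁(λ*₀₁)`, contradicting optimality of `λ*₀₁`; hence
`‖λ*₀₁ − λ*_ψ‖ ≤ C_λ`. -/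
theorem minimizers_are_close (P : ℕ)
    (Z01 Zpsi : EuclideanSpace ℝ (Fin P) → ℝ)
    (l01 lpsi : EuclideanSpace ℝ (Fin P))
    (h01min : ∀ lam, Z01 l01 ≤ Z01 lam)
    (hpsimin : ∀ lam, Zpsi lpsi ≤ Zpsi lam)
    (L Clam Cpsi ε : ℝ)
    (hL : 0 < L) (hClam : 0 < Clam) (hCpsi : 0 < Cpsi) (hε : 0 < ε)
    (hεdef : ε = L * Clam) (hCpsi2 : Cpsi > 2 * ε)
    -- (I) upper bound on the 0–1 loss
    (hI : ∀ lam, Z01 lam ≤ Zpsi lam)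
    -- (III) curvature near the surrogate minimizer
    (hIII : ∀ lam, ‖lam - lpsi‖ > Clam → Zpsi lam - Zpsi lpsi > Cpsi)
    -- (IV) closeness of the losses at the 0–1 minimizer
    (hIV : |Zpsi l01 - Z01 l01| < ε) :
    (‖l01 - lpsi‖ > Clam → Z01 lpsi < Z01 l01) ∧ ‖l01 - lpsi‖ ≤ Clam :=
  minimizers_are_close_general P Z01 Zpsi l01 lpsi h01min Clam Cpsi ε hCpsi2 hI hIII hIV
end

section
/- Let (x_i, y_i), i = 1,…,N, with x_i ∈ ℝ^{P+1} and y_i ∈ {-1,1}, and let L be a finite set of coefficient vectors. For each i define M_i = max_{λ ∈ L} (γ − y_i λᵀx_i) where γ > 0. Then for any λ ∈ L and ψ_i ∈ {0,1}: the constraint M_i ψ_i ≥ γ − y_i λᵀx_i forces ψ_i = 1 whenever y_i λᵀx_i < γ (in particular whenever y_i λᵀx_i ≤ 0, assuming scores y_iλᵀx_i ∉ (0, γ)); conversely ψ_i = 1 always satisfies the constraint. Hence min over ψ ∈ {0,1}^N subject to these constraints of Σ_i ψ_i equals Σ_i 1[y_i λᵀx_i < γ]. -/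
/-!
Since `M_i` is a maximum over `L ∋ λ`, it dominates `γ − y_i λᵀx_i`, so `ψ_i = 1` is always
feasible, while `ψ_i = 0` is feasible exactly when `γ − y_i λᵀx_i ≤ 0`. Hence the feasible binary
vectors are those lying above the indicator of `{i : y_i λᵀx_i < γ}`, and that indicator is itself
feasible; it is therefore the minimiser of `Σ_i ψ_i`.
-/

open Finset

section BigM

variable {M ψ γ s : ℝ}

theorem eq_one_of_bigM_of_lt (hψ : ψ = 0 ∨ ψ = 1) (h : M * ψ ≥ γ - s) (hs : s < γ) :
    ψ = 1 := by
  rcases hψ with rfl | rfl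
  · rw [mul_zero] at h
    linarith
  · rfl

theorem bigM_feasible_indicator (hM : γ - s ≤ M) :
    M * (if s < γ then 1 else 0) ≥ γ - s := by
  split_ifs with hs
  · rwa [mul_one]
  · rw [mul_zero]
    linarith

theorem indicator_le_of_bigM (hψ : ψ = 0 ∨ ψ = 1) (h : M * ψ ≥ γ - s) :
    (if s < γ then 1 else 0) ≤ ψ := by
  split_ifs with hs
  · exact (eq_one_of_bigM_of_lt hψ h hs).ge
  · rcases hψ with rfl | rfl <;> norm_num

end BigM

theorem isLeast_sum_bigM {ι : Type*} [Fintype ι] {M s : ι → ℝ} {γ : ℝ}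
    (hM : ∀ i, γ - s i ≤ M i) :
    IsLeast {t : ℝ | ∃ ψ : ι → ℝ, (∀ i, ψ i = 0 ∨ ψ i = 1) ∧
        (∀ i, M i * ψ i ≥ γ - s i) ∧ t = ∑ i, ψ i}
      ((univ.filter (fun i => s i < γ)).card : ℝ) := by
  have hcard : ((univ.filter (fun i => s i < γ)).card : ℝ) =
      ∑ i, if s i < γ then (1 : ℝ) else 0 := by
    rw [sum_boole]
  refine ⟨⟨fun i => if s i < γ then 1 else 0, fun i => (ite_eq_or_eq ..).symm,
    fun i => bigM_feasible_indicator (hM i), hcard⟩, ?_⟩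
  rintro t ⟨ψ, hψ, h, rfl⟩
  rw [hcard]
  exact sum_le_sum fun i _ => indicator_le_of_bigM (hψ i) (h i)

theorem bigM_zero_one_loss_encoding_general (P N : ℕ)
    (x : Fin N → Fin (P + 1) → ℝ) (y : Fin N → ℝ)
    (L : Finset (Fin (P + 1) → ℝ)) (hLne : L.Nonempty)
    (γ : ℝ) (hγ : 0 < γ)
    (M : Fin N → ℝ)
    (hM : ∀ i, M i = L.sup' hLne (fun lam => γ - y i * ∑ j, lam j * x i j))
    (lam : Fin (P + 1) → ℝ) (hlam : lam ∈ L) :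
    -- (a) feasibility forces ψ_i = 1 on small-margin (in particular misclassified) examples
    (∀ ψ : Fin N → ℝ, (∀ i, ψ i = 0 ∨ ψ i = 1) →
      (∀ i, M i * ψ i ≥ γ - y i * ∑ j, lam j * x i j) →
      ∀ i, y i * ∑ j, lam j * x i j < γ → ψ i = 1) ∧
    (∀ ψ : Fin N → ℝ, (∀ i, ψ i = 0 ∨ ψ i = 1) →
      (∀ i, M i * ψ i ≥ γ - y i * ∑ j, lam j * x i j) →
      ∀ i, y i * ∑ j, lam j * x i j ≤ 0 → ψ i = 1) ∧
    -- (b) ψ ≡ 1 always satisfies the constraints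
    (∀ i, M i * 1 ≥ γ - y i * ∑ j, lam j * x i j) ∧
    -- (c) the minimum of Σ ψ_i equals the number of examples with score below γ
    IsLeast {s : ℝ | ∃ ψ : Fin N → ℝ, (∀ i, ψ i = 0 ∨ ψ i = 1) ∧
        (∀ i, M i * ψ i ≥ γ - y i * ∑ j, lam j * x i j) ∧ s = ∑ i, ψ i}
      ((Finset.univ.filter (fun i => y i * ∑ j, lam j * x i j < γ)).card : ℝ) := by
  have hMle (i : Fin N) : γ - y i * ∑ j, lam j * x i j ≤ M i :=
    hM i ▸ le_sup' (fun lam => γ - y i * ∑ j, lam j * x i j) hlam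
  refine ⟨fun ψ hψ h i hi => eq_one_of_bigM_of_lt (hψ i) (h i) hi,
    fun ψ hψ h i hi => eq_one_of_bigM_of_lt (hψ i) (h i) (hi.trans_lt hγ),
    fun i => (mul_one (M i)).symm ▸ hMle i,
    isLeast_sum_bigM (s := fun i => y i * ∑ j, lam j * x i j) hMle⟩

/-- **Validity of the Big-M encoding of the 0–1 loss.** With
`M_i = max_{λ∈L} (γ − y_i λᵀx_i)` and no achievable score in `(0, γ)`:
the constraint `M_i ψ_i ≥ γ − y_i λᵀx_i` forces `ψ_i = 1` whenever
`y_i λᵀx_i < γ` (in particular whenever `y_i λᵀx_i ≤ 0`), `ψ = 1` is always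
feasible, and the minimum of `Σ_i ψ_i` subject to the constraints equals
`#{i : y_i λᵀx_i < γ}`. -/
theorem bigM_zero_one_loss_encoding (P N : ℕ)
    (x : Fin N → Fin (P + 1) → ℝ) (y : Fin N → ℝ) (hy : ∀ i, y i = 1 ∨ y i = -1)
    (L : Finset (Fin (P + 1) → ℝ)) (hLne : L.Nonempty)
    (γ : ℝ) (hγ : 0 < γ)
    -- no achievable score lies strictly between 0 and γ
    (hgap : ∀ lam ∈ L, ∀ i, ¬ (0 < y i * ∑ j, lam j * x i j ∧ y i * ∑ j, lam j * x i j < γ))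
    (M : Fin N → ℝ)
    (hM : ∀ i, M i = L.sup' hLne (fun lam => γ - y i * ∑ j, lam j * x i j))
    (lam : Fin (P + 1) → ℝ) (hlam : lam ∈ L) :
    -- (a) feasibility forces ψ_i = 1 on small-margin (in particular misclassified) examples
    (∀ ψ : Fin N → ℝ, (∀ i, ψ i = 0 ∨ ψ i = 1) →
      (∀ i, M i * ψ i ≥ γ - y i * ∑ j, lam j * x i j) →
      ∀ i, y i * ∑ j, lam j * x i j < γ → ψ i = 1) ∧
    (∀ ψ : Fin N → ℝ, (∀ i, ψ i = 0 ∨ ψ i = 1) →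
      (∀ i, M i * ψ i ≥ γ - y i * ∑ j, lam j * x i j) →
      ∀ i, y i * ∑ j, lam j * x i j ≤ 0 → ψ i = 1) ∧
    -- (b) ψ ≡ 1 always satisfies the constraints
    (∀ i, M i * 1 ≥ γ - y i * ∑ j, lam j * x i j) ∧
    -- (c) the minimum of Σ ψ_i equals the number of examples with score below γ
    IsLeast {s : ℝ | ∃ ψ : Fin N → ℝ, (∀ i, ψ i = 0 ∨ ψ i = 1) ∧
        (∀ i, M i * ψ i ≥ γ - y i * ∑ j, lam j * x i j) ∧ s = ∑ i, ψ i}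
      ((Finset.univ.filter (fun i => y i * ∑ j, lam j * x i j < γ)).card : ℝ) :=
  bigM_zero_one_loss_encoding_general P N x y L hLne γ hγ M hM lam hlam
end
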